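/- arXiv:1001.3178 — 2 statements merged into one kernel-verified Lean document; each statement's English description precedes it below -/
import Mathlib

section
/- For γ > 0, L a positive integer, and z ≥ 0, define In_L(z) = ∫_{x≥z} ∫_{y∈ℝ} Σ_{i=0}^{L-1} (γ(x²+y²))^i/i! · e^{-γ(x²+y²)} dy dx. Then In_L(z) = Σ_{i=0}^{L-1} Σ_{k=0}^{i} Γ(1/2+k)·Γ_inc(1/2+i-k, γz²)/(2γ·k!·(i-k)!). -/
/-!
Expanding `(γ(x² + y²))^i` binomially and factoring `e^{-γ(x² + y²)} = e^{-γx²} e^{-γy²}` writes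
the integrand as a finite sum of products `x^{2m} e^{-γx²} · y^{2k} e^{-γy²}`, so the double integral
becomes a sum of products of one-dimensional Gaussian moments. The substitution `s = γx²` turns
`∫_{x>z} x^{2m} e^{-γx²} dx` into `Γ_inc(1/2 + m, γz²) / (2γ^{m+1/2})`; the full-line moment in `y`
is twice the case `z = 0`, where `Γ_inc` is `Γ`.
-/

open MeasureTheory Real Set

/-- Upper incomplete gamma function `Γ_inc(a, t) = ∫_t^∞ s^(a-1) e^(-s) ds`. -/
noncomputable def Ginc (a t : ℝ) : ℝ := ∫ s in Set.Ioi t, s ^ (a - 1) * Real.exp (-s)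

lemma integrable_pow_mul_exp_neg_mul_sq {b : ℝ} (hb : 0 < b) (n : ℕ) :
    Integrable fun x : ℝ => x ^ n * exp (-(b * x ^ 2)) := by
  simpa only [rpow_natCast, neg_mul] using
    integrable_rpow_mul_exp_neg_mul_sq hb (s := n) (by linarith [n.cast_nonneg (α := ℝ)])

lemma integral_integral_finsetSum_mul {α β ι : Type*} [MeasurableSpace α] [MeasurableSpace β]
    {μ : Measure α} {ν : Measure β} (s : Finset ι) {f : ι → α → ℝ} {g : ι → β → ℝ}
    (hf : ∀ i ∈ s, Integrable (f i) μ) (hg : ∀ i ∈ s, Integrable (g i) ν) :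
    ∫ x, ∫ y, ∑ i ∈ s, f i x * g i y ∂ν ∂μ = ∑ i ∈ s, (∫ x, f i x ∂μ) * ∫ y, g i y ∂ν := by
  calc ∫ x, ∫ y, ∑ i ∈ s, f i x * g i y ∂ν ∂μ
      = ∫ x, ∑ i ∈ s, f i x * ∫ y, g i y ∂ν ∂μ := by
        congr 1 with x
        rw [integral_finsetSum _ fun i hi => (hg i hi).const_mul _]
        simp only [integral_const_mul]
    _ = _ := by
        rw [integral_finsetSum _ fun i hi => (hf i hi).mul_const _]
        simp only [integral_mul_const]

section SquareSubstitution

variable {b z : ℝ}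

lemma image_mul_sq_Ioi (hb : 0 < b) (hz : 0 ≤ z) :
    (fun x : ℝ => b * x ^ 2) '' Ioi z = Ioi (b * z ^ 2) := by
  ext s
  constructor
  · rintro ⟨x, hx, rfl⟩
    exact mul_lt_mul_of_pos_left (pow_lt_pow_left₀ hx hz two_ne_zero) hb
  · intro hs
    have hs' : z ^ 2 < s / b := (lt_div_iff₀' hb).2 hs
    refine ⟨√(s / b), ?_, ?_⟩
    · rw [mem_Ioi, ← sqrt_sq hz]
      exact sqrt_lt_sqrt (sq_nonneg z) hs'
    · simp only
      rw [sq_sqrt ((sq_nonneg z).trans hs'.le)]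
      field_simp

lemma injOn_mul_sq_Ioi (hb : 0 < b) (hz : 0 ≤ z) :
    InjOn (fun x : ℝ => b * x ^ 2) (Ioi z) := fun _ hx _ hy hxy =>
  (pow_left_strictMonoOn₀ two_ne_zero).injOn (hz.trans hx.le) (hz.trans hy.le)
    (mul_left_cancel₀ hb.ne' hxy)

lemma Ginc_mul_sq (hb : 0 < b) (hz : 0 ≤ z) (a : ℝ) :
    Ginc a (b * z ^ 2) = 2 * b ^ a * ∫ x in Ioi z, x ^ (2 * a - 1) * exp (-(b * x ^ 2)) := by
  have hderiv : ∀ x ∈ Ioi z, HasDerivWithinAt (fun x : ℝ => b * x ^ 2) (b * (2 * x)) (Ioi z) x :=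
    fun x _ => by simpa using ((hasDerivAt_pow 2 x).const_mul b).hasDerivWithinAt
  rw [Ginc, ← image_mul_sq_Ioi hb hz,
    integral_image_eq_integral_abs_deriv_smul measurableSet_Ioi hderiv (injOn_mul_sq_Ioi hb hz),
    ← integral_const_mul]
  refine setIntegral_congr_fun measurableSet_Ioi fun x hx => ?_
  have hx0 : 0 < x := hz.trans_lt hx
  have hpow : (b * x ^ 2) ^ (a - 1) = b ^ (a - 1) * x ^ (2 * a - 2) := by
    rw [mul_rpow hb.le (sq_nonneg x), ← rpow_natCast x 2, ← rpow_mul hx0.le]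
    norm_num [mul_sub]
  have hb' : b ^ a = b ^ (a - 1) * b := by rw [← rpow_add_one hb.ne']; ring_nf
  have hx' : x ^ (2 * a - 1) = x ^ (2 * a - 2) * x := by rw [← rpow_add_one hx0.ne']; ring_nf
  rw [smul_eq_mul, hpow, abs_of_pos (by positivity), hb', hx']
  ring

lemma setIntegral_Ioi_even_pow_mul_exp_neg_mul_sq (hb : 0 < b) (hz : 0 ≤ z) (m : ℕ) :
    ∫ x in Ioi z, x ^ (2 * m) * exp (-(b * x ^ 2))
      = Ginc (1 / 2 + m) (b * z ^ 2) / (2 * b ^ ((m : ℝ) + 1 / 2)) := by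
  have hexp : 2 * (1 / 2 + (m : ℝ)) - 1 = ((2 * m : ℕ) : ℝ) := by push_cast; ring
  rw [Ginc_mul_sq hb hz, hexp, add_comm (1 / 2 : ℝ)]
  simp only [rpow_natCast]
  field_simp

end SquareSubstitution

lemma Ginc_zero {a : ℝ} (ha : 0 < a) : Ginc a 0 = Gamma a := by
  rw [Gamma_eq_integral ha, Ginc]
  exact setIntegral_congr_fun measurableSet_Ioi fun _ _ => mul_comm _ _

lemma integral_even_pow_mul_exp_neg_mul_sq {b : ℝ} (hb : 0 < b) (k : ℕ) :
    ∫ y : ℝ, y ^ (2 * k) * exp (-(b * y ^ 2)) = Gamma (1 / 2 + k) / b ^ ((k : ℝ) + 1 / 2) := by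
  have heven : ∀ y : ℝ, y ^ (2 * k) * exp (-(b * y ^ 2)) = |y| ^ (2 * k) * exp (-(b * |y| ^ 2)) :=
    fun y => by rw [sq_abs, pow_mul, pow_mul, sq_abs]
  rw [integral_congr_ae (ae_of_all _ heven)]
  refine (integral_comp_abs (f := fun t => t ^ (2 * k) * exp (-(b * t ^ 2)))).trans ?_
  rw [setIntegral_Ioi_even_pow_mul_exp_neg_mul_sq hb le_rfl, sq, mul_zero, mul_zero,
    Ginc_zero (by positivity)]
  field_simp

lemma pow_div_factorial_mul_exp_eq_sum (b x y : ℝ) (i : ℕ) :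
    (b * (x ^ 2 + y ^ 2)) ^ i / i.factorial * exp (-(b * (x ^ 2 + y ^ 2)))
      = ∑ k ∈ Finset.range (i + 1), b ^ i / (k.factorial * (i - k).factorial) *
          (x ^ (2 * (i - k)) * exp (-(b * x ^ 2))) * (y ^ (2 * k) * exp (-(b * y ^ 2))) := by
  rw [mul_pow, add_comm (x ^ 2), add_pow, mul_add, neg_add, exp_add, Finset.mul_sum,
    Finset.sum_div, Finset.sum_mul]
  refine Finset.sum_congr rfl fun k hk => ?_
  have hfact : (i.factorial : ℝ) = i.choose k * k.factorial * (i - k).factorial := by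
    exact_mod_cast (Nat.choose_mul_factorial_mul_factorial (Finset.mem_range_succ_iff.1 hk)).symm
  have hchoose : (i.choose k : ℝ) ≠ 0 :=
    Nat.cast_ne_zero.2 (Nat.choose_pos (Finset.mem_range_succ_iff.1 hk)).ne'
  rw [hfact, pow_mul, pow_mul]
  field_simp

theorem stmt1_general (γ : ℝ) (hγ : 0 < γ) (L : ℕ) (z : ℝ) (hz : 0 ≤ z) :
    (∫ x in Set.Ici z, ∫ y : ℝ,
        ∑ i ∈ Finset.range L,
          (γ * (x ^ 2 + y ^ 2)) ^ i / (Nat.factorial i) * Real.exp (-(γ * (x ^ 2 + y ^ 2))))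
      = ∑ i ∈ Finset.range L, ∑ k ∈ Finset.range (i + 1),
          Real.Gamma (1 / 2 + k) * Ginc (1 / 2 + (i - k : ℕ)) (γ * z ^ 2)
            / (2 * γ * (Nat.factorial k) * (Nat.factorial (i - k))) := by
  simp_rw [pow_div_factorial_mul_exp_eq_sum, Finset.sum_sigma']
  rw [integral_Ici_eq_integral_Ioi, integral_integral_finsetSum_mul _
    (fun _ _ => ((integrable_pow_mul_exp_neg_mul_sq hγ _).const_mul _).integrableOn)
    (fun _ _ => integrable_pow_mul_exp_neg_mul_sq hγ _)]
  refine Finset.sum_congr rfl fun ⟨i, k⟩ hik => ?_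
  have hk : k ≤ i := Finset.mem_range_succ_iff.1 (Finset.mem_sigma.1 hik).2
  have hγpow : γ ^ (((i - k : ℕ) : ℝ) + 1 / 2) * γ ^ ((k : ℝ) + 1 / 2) = γ ^ i * γ := by
    rw [← rpow_add hγ, ← rpow_natCast, ← rpow_add_one hγ.ne']
    push_cast [Nat.cast_sub hk]
    ring_nf
  rw [integral_const_mul, setIntegral_Ioi_even_pow_mul_exp_neg_mul_sq hγ hz,
    integral_even_pow_mul_exp_neg_mul_sq hγ]
  calc _ = γ ^ i * Gamma (1 / 2 + k) * Ginc (1 / 2 + (i - k : ℕ)) (γ * z ^ 2) /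
        (2 * (γ ^ (((i - k : ℕ) : ℝ) + 1 / 2) * γ ^ ((k : ℝ) + 1 / 2)) *
          k.factorial * (i - k).factorial) := by ring
    _ = _ := by rw [hγpow]; field_simp

theorem stmt1 (γ : ℝ) (hγ : 0 < γ) (L : ℕ) (hL : 1 ≤ L) (z : ℝ) (hz : 0 ≤ z) :
    (∫ x in Set.Ici z, ∫ y : ℝ,
        ∑ i ∈ Finset.range L,
          (γ * (x ^ 2 + y ^ 2)) ^ i / (Nat.factorial i) * Real.exp (-(γ * (x ^ 2 + y ^ 2))))
      = ∑ i ∈ Finset.range L, ∑ k ∈ Finset.range (i + 1),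
          Real.Gamma (1 / 2 + k) * Ginc (1 / 2 + (i - k : ℕ)) (γ * z ^ 2)
            / (2 * γ * (Nat.factorial k) * (Nat.factorial (i - k))) :=
  stmt1_general γ hγ L z hz
end

section
/- (NFP mean progress) Let λ > 0, 0 < p < 1, β > 0, α > 2, L ≥ 1, and Δ = (2π/α)Γ(2/α)Γ(1-2/α). Suppose R has CDF P(R ≤ r) = 1 - exp(-λ(1-p)(π/2) r²), Θ is uniform on [-π/2,π/2] independent of R, and P_s(r) = Σ_{k=0}^{L-1} (λ p Δ β^{2/α} r²)^k/k! · exp(-λ p Δ β^{2/α} r²). Then E[R cos Θ · P_s(R)] = (1/√λ) Σ_{k=0}^{L-1} Γ(k+3/2) (β^{2/α}Δ)^k p^k (1-p) / (k! ((1-p)π/2 + Δβ^{2/α} p)^{k+3/2}). -/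
open MeasureTheory Real Set ProbabilityTheory
open scoped ENNReal

/-!
By independence the expectation factors as `E[R Ps(R)] · E[cos Θ]`, and `E[cos Θ] = 2/π`.
The distribution function makes `R` Rayleigh with density `2a r exp(-a r²)`, `a = λ(1-p)π/2`.
Each Poisson term `(b r²)^k/k! · exp(-b r²)` of `Ps` merges with the Rayleigh density into the
Gaussian moment `∫₀^∞ r^(2k+2) exp(-(a+b) r²) dr = Γ(k+3/2) / (2 (a+b)^(k+3/2))`, and
`a + b = λ d` with `d = (1-p)π/2 + Δβ^(2/α)p` produces the factor `1/√λ`.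
-/

theorem integral_pow_mul_exp_neg_mul_sq_Ioi (n : ℕ) {c : ℝ} (hc : 0 < c) :
    ∫ x in Ioi (0 : ℝ), x ^ n * exp (-(c * x ^ 2))
      = Gamma ((n + 1) / 2) / (2 * c ^ (((n : ℝ) + 1) / 2)) := by
  have h := integral_rpow_mul_exp_neg_mul_rpow two_pos
    (by linarith [n.cast_nonneg (α := ℝ)] : (-1 : ℝ) < n) hc
  simp only [rpow_natCast, rpow_two, neg_mul] at h
  rw [h, neg_div, rpow_neg hc.le]
  ring

theorem integral_two_mul_mul_exp_neg_mul_sq (a x : ℝ) :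
    ∫ t in (0 : ℝ)..x, 2 * a * t * exp (-a * t ^ 2) = 1 - exp (-a * x ^ 2) := by
  have hderiv (t : ℝ) :
      HasDerivAt (fun t => -exp (-a * t ^ 2)) (2 * a * t * exp (-a * t ^ 2)) t :=
    (((hasDerivAt_pow 2 t).const_mul (-a)).exp).neg.congr_deriv (by push_cast; ring)
  rw [intervalIntegral.integral_eq_sub_of_hasDerivAt (fun t _ => hderiv t)
    ((by fun_prop : Continuous _).intervalIntegrable _ _)]
  simp
  ring

noncomputable def rayleighMeasure (a : ℝ) : Measure ℝ :=
  (volume.restrict (Ioi 0)).withDensity fun r => ENNReal.ofReal (2 * a * r * exp (-a * r ^ 2))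

theorem rayleighMeasure_Iic {a x : ℝ} (ha : 0 ≤ a) (hx : 0 ≤ x) :
    rayleighMeasure a (Iic x) = ENNReal.ofReal (1 - exp (-a * x ^ 2)) := by
  have hnonneg : 0 ≤ᵐ[volume.restrict (Ioc 0 x)] fun t => 2 * a * t * exp (-a * t ^ 2) :=
    ae_restrict_of_forall_mem measurableSet_Ioc fun t ht => by
      have := ht.1.le
      positivity
  rw [rayleighMeasure, withDensity_apply _ measurableSet_Iic,
    Measure.restrict_restrict measurableSet_Iic, Iic_inter_Ioi,
    ← ofReal_integral_eq_lintegral_ofReal (by fun_prop : Continuous _).integrableOn_Ioc hnonneg,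
    ← intervalIntegral.integral_of_le hx, integral_two_mul_mul_exp_neg_mul_sq]

theorem integral_rayleighMeasure {a : ℝ} (ha : 0 ≤ a) (g : ℝ → ℝ) :
    ∫ r, g r ∂rayleighMeasure a = ∫ r in Ioi 0, 2 * a * r * exp (-a * r ^ 2) * g r := by
  rw [rayleighMeasure, integral_withDensity_eq_integral_toReal_smul (by fun_prop)
    (ae_of_all _ fun _ => ENNReal.ofReal_lt_top)]
  refine setIntegral_congr_fun measurableSet_Ioi fun r hr => ?_
  have := hr.out.le
  rw [ENNReal.toReal_ofReal (by positivity), smul_eq_mul]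

theorem map_eq_rayleighMeasure {Ω : Type*} [MeasurableSpace Ω] {P : Measure Ω}
    [IsProbabilityMeasure P] {a : ℝ} (ha : 0 ≤ a) {R : Ω → ℝ} (hR : Measurable R)
    (hcdf : ∀ r : ℝ, 0 ≤ r → (P {ω | R ω ≤ r}).toReal = 1 - exp (-a * r ^ 2)) :
    P.map R = rayleighMeasure a := by
  have := Measure.isProbabilityMeasure_map (μ := P) hR.aemeasurable
  have hIic {x : ℝ} (hx : 0 ≤ x) : P.map R (Iic x) = rayleighMeasure a (Iic x) := by
    rw [Measure.map_apply hR measurableSet_Iic, rayleighMeasure_Iic ha hx, ← hcdf x hx,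
      ENNReal.ofReal_toReal (measure_ne_top _ _)]
    rfl
  have hzero : rayleighMeasure a (Iic 0) = 0 := by simp [rayleighMeasure_Iic ha le_rfl]
  refine Measure.ext_of_Iic _ _ fun x => ?_
  rcases le_total 0 x with hx | hx
  · exact hIic hx
  · have hsub : Iic x ⊆ Iic 0 := Iic_subset_Iic.mpr hx
    rw [measure_mono_null hsub hzero, measure_mono_null hsub (hIic le_rfl ▸ hzero)]

theorem integral_cos_uniform :
    ∫ θ, cos θ ∂((ENNReal.ofReal π)⁻¹ • volume.restrict (Icc (-(π / 2)) (π / 2)))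
      = 2 / π := by
  rw [integral_smul_measure, integral_Icc_eq_integral_Ioc,
    ← intervalIntegral.integral_of_le (by linarith [pi_pos]), integral_cos, sin_pi_div_two,
    sin_neg, sin_pi_div_two, ENNReal.toReal_inv, ENNReal.toReal_ofReal pi_pos.le, smul_eq_mul]
  ring

open scoped Nat in
theorem integral_id_mul_poissonCDF_rayleighMeasure {a b : ℝ} (ha : 0 ≤ a) (hab : 0 < a + b)
    (L : ℕ) :
    ∫ r, r * ∑ k ∈ Finset.range L, (b * r ^ 2) ^ k / k ! * exp (-(b * r ^ 2))
        ∂rayleighMeasure a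
      = ∑ k ∈ Finset.range L,
          a * b ^ k * Gamma (k + 3 / 2) / (k ! * (a + b) ^ ((k : ℝ) + 3 / 2)) := by
  have hterm (k : ℕ) (r : ℝ) :
      2 * a * r * exp (-a * r ^ 2) * (r * ((b * r ^ 2) ^ k / k ! * exp (-(b * r ^ 2))))
        = 2 * a * b ^ k / k ! * (r ^ (2 * k + 2) * exp (-((a + b) * r ^ 2))) := by
    rw [show -((a + b) * r ^ 2) = -a * r ^ 2 + -(b * r ^ 2) by ring, exp_add]
    ring
  have hint (k : ℕ) :
      IntegrableOn (fun r => r ^ (2 * k + 2) * exp (-((a + b) * r ^ 2))) (Ioi 0) := by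
    have h := integrableOn_rpow_mul_exp_neg_mul_sq hab (s := ((2 * k + 2 : ℕ) : ℝ))
      (neg_one_lt_zero.trans_le (Nat.cast_nonneg _))
    simpa only [rpow_natCast, neg_mul] using h
  simp_rw [integral_rayleighMeasure ha, Finset.mul_sum, hterm]
  rw [integral_finsetSum _ fun k _ => (hint k).const_mul _]
  refine Finset.sum_congr rfl fun k _ => ?_
  rw [integral_const_mul, integral_pow_mul_exp_neg_mul_sq_Ioi _ hab]
  have hexp : (((2 * k + 2 : ℕ) : ℝ) + 1) / 2 = k + 3 / 2 := by push_cast; ring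
  rw [hexp]
  field_simp

theorem mul_rpow_natCast_add_three_halves {x y : ℝ} (hx : 0 < x) (hy : 0 ≤ y) (k : ℕ) :
    (x * y) ^ ((k : ℝ) + 3 / 2) = x ^ (k + 1) * √x * y ^ ((k : ℝ) + 3 / 2) := by
  rw [mul_rpow hx.le hy, show (k : ℝ) + 3 / 2 = (k + 1 : ℕ) + 1 / 2 by push_cast; ring,
    rpow_add hx, rpow_natCast, sqrt_eq_rpow]

theorem two_pi_div_mul_Gamma_mul_Gamma_pos {α : ℝ} (hα : 2 < α) :
    0 < 2 * π / α * Gamma (2 / α) * Gamma (1 - 2 / α) := by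
  have h2α : 2 / α < 1 := (div_lt_one (by linarith)).2 hα
  have := Gamma_pos_of_pos (by positivity : 0 < 2 / α)
  have := Gamma_pos_of_pos (sub_pos.2 h2α)
  positivity

theorem stmt5_general {Ω : Type*} [MeasureSpace Ω] (P : Measure Ω) [IsProbabilityMeasure P]
    (lam p β α : ℝ) (L : ℕ) (hlam : 0 < lam) (hp : 0 < p) (hp1 : p < 1) (hβ : 0 < β)
    (hα : 2 < α)
    (Δ : ℝ) (hΔ : Δ = (2 * Real.pi / α) * Real.Gamma (2 / α) * Real.Gamma (1 - 2 / α))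
    (R Θ : Ω → ℝ) (hR : Measurable R) (hΘ : Measurable Θ)
    (hcdf : ∀ r : ℝ, 0 ≤ r →
      (P {ω | R ω ≤ r}).toReal = 1 - Real.exp (-(lam * (1 - p) * (Real.pi / 2)) * r ^ 2))
    (hunif : Measure.map Θ P
      = (ENNReal.ofReal Real.pi)⁻¹ • volume.restrict (Set.Icc (-(Real.pi / 2)) (Real.pi / 2)))
    (hindep : IndepFun R Θ P)
    (Ps : ℝ → ℝ)
    (hPs : ∀ r, Ps r = ∑ k ∈ Finset.range L,
      (lam * p * Δ * β ^ (2 / α) * r ^ 2) ^ k / (Nat.factorial k)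
        * Real.exp (-(lam * p * Δ * β ^ (2 / α) * r ^ 2))) :
    (∫ ω, R ω * Real.cos (Θ ω) * Ps (R ω) ∂P)
      = (1 / Real.sqrt lam) * ∑ k ∈ Finset.range L,
          Real.Gamma (k + 3 / 2) * (β ^ (2 / α) * Δ) ^ k * p ^ k * (1 - p)
            / ((Nat.factorial k)
              * ((1 - p) * Real.pi / 2 + Δ * β ^ (2 / α) * p) ^ ((k : ℝ) + 3 / 2)) := by
  have hΔpos : 0 < Δ := hΔ ▸ two_pi_div_mul_Gamma_mul_Gamma_pos hα
  have h1p : 0 < 1 - p := sub_pos.2 hp1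
  set d := (1 - p) * π / 2 + Δ * β ^ (2 / α) * p
  set a := lam * (1 - p) * (π / 2)
  set b := lam * p * Δ * β ^ (2 / α)
  have hPs_eq : Ps = fun r => ∑ k ∈ Finset.range L,
      (b * r ^ 2) ^ k / (Nat.factorial k) * exp (-(b * r ^ 2)) := funext hPs
  have hPsm : Measurable Ps := hPs_eq ▸ by fun_prop
  calc ∫ ω, R ω * cos (Θ ω) * Ps (R ω) ∂P
      = (∫ ω, R ω * Ps (R ω) ∂P) * ∫ ω, cos (Θ ω) ∂P := by
        have := hindep.integral_comp_mul_comp (f := fun r => r * Ps r) (g := cos)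
          hR.aemeasurable hΘ.aemeasurable (by fun_prop) (by fun_prop)
        simpa only [Pi.mul_apply, Function.comp_apply, mul_right_comm] using this
    _ = (∫ r, r * Ps r ∂rayleighMeasure a) * (2 / π) := by
        rw [← map_eq_rayleighMeasure (by positivity) hR hcdf,
          integral_map hR.aemeasurable (by fun_prop),
          ← integral_map hΘ.aemeasurable (by fun_prop), hunif, integral_cos_uniform]
    _ = _ := by
        rw [hPs_eq, integral_id_mul_poissonCDF_rayleighMeasure (by positivity) (by positivity),
          Finset.sum_mul, Finset.mul_sum]
        refine Finset.sum_congr rfl fun k _ => ?_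
        have := sqrt_pos.2 hlam
        rw [show a + b = lam * d by ring, mul_rpow_natCast_add_three_halves hlam (by positivity)]
        field_simp
        ring

theorem stmt5 {Ω : Type*} [MeasureSpace Ω] (P : Measure Ω) [IsProbabilityMeasure P]
    (lam p β α : ℝ) (L : ℕ) (hlam : 0 < lam) (hp : 0 < p) (hp1 : p < 1) (hβ : 0 < β)
    (hα : 2 < α) (hL : 1 ≤ L)
    (Δ : ℝ) (hΔ : Δ = (2 * Real.pi / α) * Real.Gamma (2 / α) * Real.Gamma (1 - 2 / α))
    (R Θ : Ω → ℝ) (hR : Measurable R) (hΘ : Measurable Θ) (hRpos : ∀ ω, 0 ≤ R ω)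
    (hcdf : ∀ r : ℝ, 0 ≤ r →
      (P {ω | R ω ≤ r}).toReal = 1 - Real.exp (-(lam * (1 - p) * (Real.pi / 2)) * r ^ 2))
    (hunif : Measure.map Θ P
      = (ENNReal.ofReal Real.pi)⁻¹ • volume.restrict (Set.Icc (-(Real.pi / 2)) (Real.pi / 2)))
    (hindep : IndepFun R Θ P)
    (Ps : ℝ → ℝ)
    (hPs : ∀ r, Ps r = ∑ k ∈ Finset.range L,
      (lam * p * Δ * β ^ (2 / α) * r ^ 2) ^ k / (Nat.factorial k)
        * Real.exp (-(lam * p * Δ * β ^ (2 / α) * r ^ 2))) :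
    (∫ ω, R ω * Real.cos (Θ ω) * Ps (R ω) ∂P)
      = (1 / Real.sqrt lam) * ∑ k ∈ Finset.range L,
          Real.Gamma (k + 3 / 2) * (β ^ (2 / α) * Δ) ^ k * p ^ k * (1 - p)
            / ((Nat.factorial k)
              * ((1 - p) * Real.pi / 2 + Δ * β ^ (2 / α) * p) ^ ((k : ℝ) + 3 / 2)) :=
  stmt5_general P lam p β α L hlam hp hp1 hβ hα Δ hΔ R Θ hR hΘ hcdf hunif hindep Ps hPs
end
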